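/- arXiv:2304.02262 — 2 statements merged into one kernel-verified Lean document; each statement's English description precedes it below -/
import Mathlib

section
/- Let U ⊆ ℝ^d be a nonempty closed convex set, let u, u* ∈ U, g ∈ ℝ^d, and η > 0, and let u⁺ = P_U(u + η g) be the Euclidean projection of u + η g onto U. Then 2 ⟨g, u* − u⟩ ≤ (‖u* − u‖₂² − ‖u* − u⁺‖₂²)/η + η ‖g‖₂². -/
open scoped RealInnerProductSpace

/-- The per-step inequality in the proof of the regret bound for online stochastic
subgradient descent: if `u⁺` is the Euclidean projection of `u + η • g` onto the
nonempty closed convex set `U`, then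
`2 ⟨g, u* − u⟩ ≤ (‖u* − u‖² − ‖u* − u⁺‖²)/η + η ‖g‖²`. -/
theorem stmt2 {d : ℕ} (U : Set (EuclideanSpace ℝ (Fin d)))
    (hUne : U.Nonempty) (hUcl : IsClosed U) (hUconv : Convex ℝ U)
    (u ustar : EuclideanSpace ℝ (Fin d)) (hu : u ∈ U) (hustar : ustar ∈ U)
    (g : EuclideanSpace ℝ (Fin d)) (η : ℝ) (hη : 0 < η)
    (uplus : EuclideanSpace ℝ (Fin d)) (huplus : uplus ∈ U)
    (hproj : ∀ q ∈ U, ‖uplus - (u + η • g)‖ ≤ ‖q - (u + η • g)‖) :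
    2 * ⟪g, ustar - u⟫ ≤ (‖ustar - u‖ ^ 2 - ‖ustar - uplus‖ ^ 2) / η + η * ‖g‖ ^ 2 := by
  set x := u + η • g with hx
  have hinf : ‖x - uplus‖ = ⨅ w : U, ‖x - w‖ := by
    haveI : Nonempty U := ⟨⟨uplus, huplus⟩⟩
    apply le_antisymm
    · apply le_ciInf
      intro w
      rw [norm_sub_rev x uplus, norm_sub_rev x w]
      exact hproj w w.2
    · have hbdd : BddBelow (Set.range fun w : U => ‖x - (w : EuclideanSpace ℝ (Fin d))‖) := by
        refine ⟨0, ?_⟩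
        rintro r ⟨w, rfl⟩
        exact norm_nonneg _
      exact ciInf_le hbdd ⟨uplus, huplus⟩
  have key : ⟪x - uplus, ustar - uplus⟫ ≤ 0 :=
    (norm_eq_iInf_iff_real_inner_le_zero hUconv huplus).mp hinf ustar hustar
  have h1 : ‖ustar - uplus‖ ^ 2 ≤ ‖ustar - x‖ ^ 2 := by
    have expand : ‖ustar - x‖ ^ 2
        = ‖ustar - uplus‖ ^ 2 - 2 * ⟪x - uplus, ustar - uplus⟫ + ‖x - uplus‖ ^ 2 := by
      have : ustar - x = (ustar - uplus) - (x - uplus) := by abel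
      rw [this, norm_sub_sq_real, real_inner_comm]
    nlinarith [sq_nonneg ‖x - uplus‖]
  have h2 : ‖ustar - x‖ ^ 2
      = ‖ustar - u‖ ^ 2 - 2 * η * ⟪g, ustar - u⟫ + η ^ 2 * ‖g‖ ^ 2 := by
    have : ustar - x = (ustar - u) - η • g := by rw [hx]; abel
    rw [this, norm_sub_sq_real, real_inner_smul_right, norm_smul, real_inner_comm,
      Real.norm_eq_abs, mul_pow, sq_abs]
    ring
  rw [div_add' _ _ _ (ne_of_gt hη), le_div_iff₀ hη]
  nlinarith
end

section
/- Let v_1, …, v_m ∈ ℝ^d be vectors, not all zero, let s ∈ ℕ with s ≥ 1, and let λ > 0. Define the probability distribution p on [m] × [d] by p(i,j) = |(v_i)_j| / ∑_{k=1}^m ‖v_k‖₁, let (I_1, J_1), …, (I_s, J_s) be i.i.d. samples from p, set Γ = λ ∑_{k=1}^m ‖v_k‖₁, and define random vectors g_1, …, g_m ∈ ℝ^d by (g_i)_j = (|{ℓ ∈ [s] : (I_ℓ, J_ℓ) = (i,j)}| / s) · sign((v_i)_j) · Γ. Then for every i ∈ [m], E[‖g_i‖₂²] = λ² [ (1 −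 1/s) ‖v_i‖₂² + (1/s) ‖v_i‖₁ ∑_{k=1}^m ‖v_k‖₁ ]. In particular, if ‖v_i‖₂ ≤ G₂, ‖v_i‖₁ ≤ G_∞, ∑_{k=1}^m ‖v_k‖₁ ≤ G₁, and G₁ G_∞ ≥ G₂², then E[‖g_i‖₂²] ≤ λ² ( G₂² + (G₁ G_∞ − G₂²)/s ). -/
/-!
The count `N` of a fixed outcome `a = (i, j)` among the `s` samples is a sum of `s` indicators
of independent events of probability `p = |(v_i)_j| / ∑_k ‖v_k‖₁`, so
`E[N²] = s p + s (s - 1) p²`. Since `(g_i)_j = N · sign((v_i)_j) · Γ / s` and `Γ = λ ∑_k ‖v_k‖₁`,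
this gives `E[(g_i)_j²] = λ² ((1 - 1/s) (v_i)_j² + (1/s) |(v_i)_j| ∑_k ‖v_k‖₁)`, which is summed
over `j`. The bound is monotonicity of this expression in `‖v_i‖₂²`, `‖v_i‖₁` and `∑_k ‖v_k‖₁`.
-/

open MeasureTheory ProbabilityTheory

section Count

variable {Ω ι α : Type*} [Fintype ι]

lemma sq_sum_indicator_one (A : ι → Set Ω) (ω : Ω) :
    (∑ ℓ, (A ℓ).indicator (1 : Ω → ℝ) ω) ^ 2 =
      ∑ ℓ, ∑ ℓ', (A ℓ ∩ A ℓ').indicator (1 : Ω → ℝ) ω := by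
  simp only [sq, Finset.sum_mul_sum, Set.inter_indicator_one, Pi.mul_apply]

lemma card_filter_eq_sum_indicator [DecidableEq α] (S : ι → Ω → α) (a : α) (ω : Ω) :
    ((Finset.univ.filter fun ℓ => S ℓ ω = a).card : ℝ) =
      ∑ ℓ, (S ℓ ⁻¹' {a}).indicator (1 : Ω → ℝ) ω := by
  rw [Finset.card_filter, Nat.cast_sum]
  refine Finset.sum_congr rfl fun ℓ _ => ?_
  by_cases h : S ℓ ω = a <;> simp [h]

variable [MeasurableSpace Ω] {μ : Measure Ω}

lemma integrable_sq_sum_indicator_one [IsFiniteMeasure μ] {A : ι → Set Ω}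
    (hA : ∀ ℓ, MeasurableSet (A ℓ)) :
    Integrable (fun ω => (∑ ℓ, (A ℓ).indicator (1 : Ω → ℝ) ω) ^ 2) μ := by
  simp only [sq_sum_indicator_one]
  exact integrable_finsetSum _ fun ℓ _ => integrable_finsetSum _ fun ℓ' _ =>
    (integrable_const 1).indicator ((hA ℓ).inter (hA ℓ'))

lemma integral_sq_sum_indicator_one [IsFiniteMeasure μ] {A : ι → Set Ω}
    (hA : ∀ ℓ, MeasurableSet (A ℓ)) :
    ∫ ω, (∑ ℓ, (A ℓ).indicator (1 : Ω → ℝ) ω) ^ 2 ∂μ = ∑ ℓ, ∑ ℓ', μ.real (A ℓ ∩ A ℓ') := by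
  have hint : ∀ ℓ ℓ', Integrable ((A ℓ ∩ A ℓ').indicator (1 : Ω → ℝ)) μ := fun ℓ ℓ' =>
    (integrable_const 1).indicator ((hA ℓ).inter (hA ℓ'))
  simp only [sq_sum_indicator_one]
  rw [integral_finsetSum _ fun ℓ _ => integrable_finsetSum _ fun ℓ' _ => hint ℓ ℓ']
  refine Finset.sum_congr rfl fun ℓ _ => ?_
  rw [integral_finsetSum _ fun ℓ' _ => hint ℓ ℓ']
  exact Finset.sum_congr rfl fun ℓ' _ => integral_indicator_one ((hA ℓ).inter (hA ℓ'))

lemma integral_sq_sum_indicator_one_of_pairwise [IsFiniteMeasure μ] {A : ι → Set Ω}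
    (hA : ∀ ℓ, MeasurableSet (A ℓ)) {p : ℝ} (hp : ∀ ℓ, μ.real (A ℓ) = p)
    (hindep : Pairwise fun ℓ ℓ' => μ.real (A ℓ ∩ A ℓ') = μ.real (A ℓ) * μ.real (A ℓ')) :
    ∫ ω, (∑ ℓ, (A ℓ).indicator (1 : Ω → ℝ) ω) ^ 2 ∂μ =
      Fintype.card ι * p + Fintype.card ι * (Fintype.card ι - 1) * p ^ 2 := by
  classical
  have hpair : ∀ ℓ ℓ', μ.real (A ℓ ∩ A ℓ') = p ^ 2 + if ℓ = ℓ' then p - p ^ 2 else 0 := by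
    intro ℓ ℓ'
    rcases eq_or_ne ℓ ℓ' with rfl | hne
    · simp [hp]
    · simp [hindep hne, hp, hne, sq]
  simp only [integral_sq_sum_indicator_one hA, hpair, Finset.sum_add_distrib,
    Finset.sum_ite_eq, Finset.mem_univ, if_true, Finset.sum_const, Finset.card_univ, nsmul_eq_mul]
  ring

variable [MeasurableSpace α] [MeasurableSingletonClass α] [DecidableEq α]
  {S : ι → Ω → α}

lemma integrable_sq_card_filter [IsFiniteMeasure μ] (hmeas : ∀ ℓ, Measurable (S ℓ)) (a : α) :
    Integrable (fun ω => ((Finset.univ.filter fun ℓ => S ℓ ω = a).card : ℝ) ^ 2) μ := by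
  simp only [card_filter_eq_sum_indicator]
  exact integrable_sq_sum_indicator_one fun ℓ => hmeas ℓ (measurableSet_singleton a)

lemma integral_sq_card_filter [IsFiniteMeasure μ] (hmeas : ∀ ℓ, Measurable (S ℓ))
    (hiid : iIndepFun S μ) (a : α) {p : ℝ} (hp : ∀ ℓ, μ.real (S ℓ ⁻¹' {a}) = p) :
    ∫ ω, ((Finset.univ.filter fun ℓ => S ℓ ω = a).card : ℝ) ^ 2 ∂μ =
      Fintype.card ι * p + Fintype.card ι * (Fintype.card ι - 1) * p ^ 2 := by
  simp only [card_filter_eq_sum_indicator]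
  refine integral_sq_sum_indicator_one_of_pairwise
    (fun ℓ => hmeas ℓ (measurableSet_singleton a)) hp fun ℓ ℓ' hne => ?_
  simp only [measureReal_def, ← ENNReal.toReal_mul,
    (hiid.indepFun hne).measure_inter_preimage_eq_mul _ _ (measurableSet_singleton a)
      (measurableSet_singleton a)]

end Count

lemma Real.sign_sq_of_ne_zero {x : ℝ} (hx : x ≠ 0) : Real.sign x ^ 2 = 1 := by
  rcases hx.lt_or_gt with h | h
  · simp [Real.sign_of_neg h]
  · simp [Real.sign_of_pos h]

lemma integral_sq_div_mul_sign_mul {Ω : Type*} [MeasurableSpace Ω] {μ : Measure Ω}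
    {s : ℕ} (hs : 1 ≤ s) {N : Ω → ℝ} {x T lam : ℝ} (hxT : |x| ≤ T)
    (hN : ∫ ω, N ω ^ 2 ∂μ = s * (|x| / T) + s * (s - 1) * (|x| / T) ^ 2) :
    ∫ ω, (N ω / s * Real.sign x * (lam * T)) ^ 2 ∂μ =
      lam ^ 2 * ((1 - 1 / s) * x ^ 2 + 1 / s * |x| * T) := by
  rcases eq_or_ne x 0 with rfl | hx
  · simp
  have hs' : (s : ℝ) ≠ 0 := Nat.cast_ne_zero.2 (by omega)
  have hT : T ≠ 0 := ((abs_pos.2 hx).trans_le hxT).ne'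
  simp only [mul_pow, div_pow]
  rw [integral_mul_const, integral_mul_const, integral_div, hN, Real.sign_sq_of_ne_zero hx,
    ← sq_abs x]
  field_simp
  ring

lemma second_moment_le {s A B T G₁ G₂ Ginf lam : ℝ} (hs : 1 ≤ s) (hA : A ≤ G₂ ^ 2)
    (hB₀ : 0 ≤ B) (hB : B ≤ Ginf) (hT₀ : 0 ≤ T) (hT : T ≤ G₁) :
    lam ^ 2 * ((1 - 1 / s) * A + 1 / s * B * T) ≤
      lam ^ 2 * (G₂ ^ 2 + (G₁ * Ginf - G₂ ^ 2) / s) := by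
  have h1s : 0 ≤ 1 - 1 / s := sub_nonneg.2 ((div_le_one (by linarith)).2 hs)
  have hBT : B * T ≤ G₁ * Ginf := by
    rw [mul_comm G₁]; exact mul_le_mul hB hT hT₀ (hB₀.trans hB)
  have key : (1 - 1 / s) * A + 1 / s * B * T ≤ (1 - 1 / s) * G₂ ^ 2 + 1 / s * (G₁ * Ginf) := by
    linarith [mul_le_mul_of_nonneg_left hA h1s,
      mul_le_mul_of_nonneg_left hBT (by positivity : (0 : ℝ) ≤ 1 / s)]
  calc lam ^ 2 * ((1 - 1 / s) * A + 1 / s * B * T)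
      ≤ lam ^ 2 * ((1 - 1 / s) * G₂ ^ 2 + 1 / s * (G₁ * Ginf)) :=
        mul_le_mul_of_nonneg_left key (sq_nonneg lam)
    _ = lam ^ 2 * (G₂ ^ 2 + (G₁ * Ginf - G₂ ^ 2) / s) := by ring

theorem stmt6_general {m d s : ℕ} (hs : 1 ≤ s)
    {Ω : Type*} [MeasurableSpace Ω] (μ : Measure Ω) [IsProbabilityMeasure μ]
    (v : Fin m → Fin d → ℝ)
    (lam : ℝ)
    (S : Fin s → Ω → Fin m × Fin d)
    (hmeas : ∀ ℓ, Measurable (S ℓ))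
    (hiid : iIndepFun S μ)
    (hdist : ∀ (ℓ : Fin s) (a : Fin m × Fin d),
      μ (S ℓ ⁻¹' {a}) = ENNReal.ofReal (|v a.1 a.2| / ∑ k, ∑ j, |v k j|))
    (Γ : ℝ) (hΓ : Γ = lam * ∑ k, ∑ j, |v k j|)
    (g : Fin m → Ω → Fin d → ℝ)
    (hg : ∀ i ω j, g i ω j =
      (((Finset.univ.filter fun ℓ => S ℓ ω = (i, j)).card : ℝ) / s)
        * Real.sign (v i j) * Γ) :
    (∀ i, ∫ ω, ∑ j, (g i ω j) ^ 2 ∂μ =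
      lam ^ 2 * ((1 - 1 / s) * ∑ j, (v i j) ^ 2
        + (1 / s) * (∑ j, |v i j|) * ∑ k, ∑ j, |v k j|))
    ∧ ∀ G₁ G₂ Ginf : ℝ,
        (∀ i, Real.sqrt (∑ j, (v i j) ^ 2) ≤ G₂) →
        (∀ i, ∑ j, |v i j| ≤ Ginf) →
        (∑ k, ∑ j, |v k j|) ≤ G₁ →
        G₂ ^ 2 ≤ G₁ * Ginf →
        ∀ i, ∫ ω, ∑ j, (g i ω j) ^ 2 ∂μ ≤
          lam ^ 2 * (G₂ ^ 2 + (G₁ * Ginf - G₂ ^ 2) / s) := by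
  set T := ∑ k, ∑ j, |v k j|
  have hT₀ : 0 ≤ T := by positivity
  have habs_le : ∀ i j, |v i j| ≤ T := fun i j =>
    (Finset.single_le_sum (fun j _ => abs_nonneg (v i j)) (Finset.mem_univ j)).trans
      (Finset.single_le_sum (f := fun k => ∑ j, |v k j|) (fun k _ => by positivity)
        (Finset.mem_univ i))
  have hcoord : ∀ i j, ∫ ω, (g i ω j) ^ 2 ∂μ =
      lam ^ 2 * ((1 - 1 / s) * v i j ^ 2 + 1 / s * |v i j| * T) := fun i j => by
    simp only [hg, hΓ]
    refine integral_sq_div_mul_sign_mul hs (habs_le i j) ?_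
    rw [integral_sq_card_filter hmeas hiid (i, j) fun ℓ => by
      rw [measureReal_def, hdist, ENNReal.toReal_ofReal (by positivity)], Fintype.card_fin]
  have hidentity : ∀ i, ∫ ω, ∑ j, (g i ω j) ^ 2 ∂μ =
      lam ^ 2 * ((1 - 1 / s) * ∑ j, (v i j) ^ 2 + (1 / s) * (∑ j, |v i j|) * T) := fun i => by
    rw [integral_finsetSum _ fun j _ => by
      simpa only [hg, mul_pow, div_pow] using
        (integrable_sq_card_filter (μ := μ) hmeas (i, j)).div_const _ |>.mul_const _ |>.mul_const _]
    simp only [hcoord, ← Finset.mul_sum, Finset.sum_add_distrib, ← Finset.sum_mul]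
  refine ⟨hidentity, fun G₁ G₂ Ginf hG₂ hGinf hG₁ _ i => ?_⟩
  rw [hidentity i]
  have hsq : ∑ j, v i j ^ 2 ≤ G₂ ^ 2 := by
    rw [← Real.sq_sqrt (by positivity : 0 ≤ ∑ j, v i j ^ 2)]
    exact pow_le_pow_left₀ (Real.sqrt_nonneg _) (hG₂ i) 2
  exact second_moment_le (by exact_mod_cast hs) hsq (by positivity) (hGinf i) hT₀ hG₁

/-- Second-moment identity and bound for the ℓ₁-sampling-based stochastic subgradient:
with `(I_ℓ, J_ℓ)` i.i.d. samples from `p(i,j) = |(v_i)_j| / ∑_k ‖v_k‖₁`,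
`Γ = λ ∑_k ‖v_k‖₁` and `(g_i)_j = (#{ℓ : (I_ℓ,J_ℓ) = (i,j)}/s) · sign((v_i)_j) · Γ`,
one has `E[‖g_i‖₂²] = λ²[(1 − 1/s)‖v_i‖₂² + (1/s)‖v_i‖₁ ∑_k ‖v_k‖₁]`; in particular,
if `‖v_i‖₂ ≤ G₂`, `‖v_i‖₁ ≤ G_∞`, `∑_k ‖v_k‖₁ ≤ G₁`, and `G₁ G_∞ ≥ G₂²`, then
`E[‖g_i‖₂²] ≤ λ²(G₂² + (G₁ G_∞ − G₂²)/s)`. -/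
theorem stmt6 {m d s : ℕ} (hm : 0 < m) (hd : 0 < d) (hs : 1 ≤ s)
    {Ω : Type*} [MeasurableSpace Ω] (μ : Measure Ω) [IsProbabilityMeasure μ]
    (v : Fin m → Fin d → ℝ) (hv : ∃ i j, v i j ≠ 0)
    (lam : ℝ) (hlam : 0 < lam)
    (S : Fin s → Ω → Fin m × Fin d)
    (hmeas : ∀ ℓ, Measurable (S ℓ))
    (hiid : iIndepFun S μ)
    (hdist : ∀ (ℓ : Fin s) (a : Fin m × Fin d),
      μ (S ℓ ⁻¹' {a}) = ENNReal.ofReal (|v a.1 a.2| / ∑ k, ∑ j, |v k j|))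
    (Γ : ℝ) (hΓ : Γ = lam * ∑ k, ∑ j, |v k j|)
    (g : Fin m → Ω → Fin d → ℝ)
    (hg : ∀ i ω j, g i ω j =
      (((Finset.univ.filter fun ℓ => S ℓ ω = (i, j)).card : ℝ) / s)
        * Real.sign (v i j) * Γ) :
    (∀ i, ∫ ω, ∑ j, (g i ω j) ^ 2 ∂μ =
      lam ^ 2 * ((1 - 1 / s) * ∑ j, (v i j) ^ 2
        + (1 / s) * (∑ j, |v i j|) * ∑ k, ∑ j, |v k j|))
    ∧ ∀ G₁ G₂ Ginf : ℝ,
        (∀ i, Real.sqrt (∑ j, (v i j) ^ 2) ≤ G₂) →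
        (∀ i, ∑ j, |v i j| ≤ Ginf) →
        (∑ k, ∑ j, |v k j|) ≤ G₁ →
        G₂ ^ 2 ≤ G₁ * Ginf →
        ∀ i, ∫ ω, ∑ j, (g i ω j) ^ 2 ∂μ ≤
          lam ^ 2 * (G₂ ^ 2 + (G₁ * Ginf - G₂ ^ 2) / s) :=
  stmt6_general hs μ v lam S hmeas hiid hdist Γ hΓ g hg
end
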